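/- arXiv:2411.03767 — 5 statements merged into one kernel-verified Lean document; each statement's English description precedes it below -/
import Mathlib

section
/- Let Ω be an arbitrary open set in ℝⁿ and let (Ω_k^□)_{k∈ℕ} be its dyadic approximations rooted in a fixed family of cubes (one cube per connected component). Then (Ω_k^□) is a non-decreasing sequence of open subsets of Ω whose union is Ω; in particular the characteristic functions 1_{Ω_k^□} converge pointwise to 1_Ω. -/
/-! The approximations increase because an approximation of order `k` is also drawn on `Π_k'`
for `k' ≥ k`, so the maximal one of order `k'` contains it. For exhaustion, fix a component `C`
and let `V ⊆ C` be the union of the interiors of its approximations. `V` is open and contains the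
interior of the root cube; it is also closed in `C`: if `y ∈ C` is adherent to `V`, the block of
`3ⁿ` cubes of a fine grid around `y` lies in `C` and meets the interior of some approximation,
adding the block keeps the interior connected, so by maximality the block, hence a neighbourhood
of `y`, lies in that approximation. Since `C` is connected, `V = C`. -/

open Set Filter Topology

noncomputable section

/-- The closed dyadic cube of order `k` indexed by `j ∈ ℤⁿ`. -/
def dyadicCube (n k : ℕ) (j : Fin n → ℤ) : Set (EuclideanSpace ℝ (Fin n)) :=
  {x | ∀ m : Fin n, (j m : ℝ) / 2 ^ k ≤ x m ∧ x m ≤ ((j m : ℝ) + 1) / 2 ^ k}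

/-- A set is drawn on the dyadic grid `Π_k` if it is a union of cubes of that grid. -/
def DrawnOn (n k : ℕ) (Q : Set (EuclideanSpace ℝ (Fin n))) : Prop :=
  ∃ 𝒬 : Set (Fin n → ℤ), Q = ⋃ j ∈ 𝒬, dyadicCube n k j

/-- `A` is the maximal set drawn on the dyadic grid of order `k`, rooted in `π₀`,
contained in `C`, with connected interior. -/
def IsMaxDyadicApprox (n k : ℕ) (π₀ C A : Set (EuclideanSpace ℝ (Fin n))) : Prop :=
  DrawnOn n k A ∧ π₀ ⊆ A ∧ A ⊆ C ∧ IsConnected (interior A) ∧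
    ∀ B : Set (EuclideanSpace ℝ (Fin n)),
      DrawnOn n k B → π₀ ⊆ B → B ⊆ C → IsConnected (interior B) → B ⊆ A

theorem isPreconnected_interior_union {X : Type*} [TopologicalSpace X] {s t : Set X}
    (hs : s ⊆ closure (interior s)) (ht : t ⊆ closure (interior t))
    (hs' : IsPreconnected (interior s)) (ht' : IsPreconnected (interior t))
    (hst : (interior s ∩ interior t).Nonempty) : IsPreconnected (interior (s ∪ t)) := by
  obtain ⟨z, hzs, hzt⟩ := hst
  refine (hs'.union z hzs hzt ht').subset_closure
    (union_subset (interior_mono subset_union_left) (interior_mono subset_union_right)) ?_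
  rw [closure_union]
  exact interior_subset.trans (union_subset_union hs ht)

section Boxes

variable {n : ℕ}

def closedBox (l u : Fin n → ℝ) : Set (EuclideanSpace ℝ (Fin n)) :=
  {x | ∀ m, l m ≤ x m ∧ x m ≤ u m}

def openBox (l u : Fin n → ℝ) : Set (EuclideanSpace ℝ (Fin n)) :=
  {x | ∀ m, l m < x m ∧ x m < u m}

theorem closedBox_eq_preimage (l u : Fin n → ℝ) :
    closedBox l u = WithLp.ofLp ⁻¹' univ.pi fun m => Icc (l m) (u m) := by
  ext; simp only [closedBox, mem_preimage, mem_univ_pi, mem_Icc]; rfl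

theorem openBox_eq_preimage (l u : Fin n → ℝ) :
    openBox l u = WithLp.ofLp ⁻¹' univ.pi fun m => Ioo (l m) (u m) := by
  ext; simp only [openBox, mem_preimage, mem_univ_pi, mem_Ioo]; rfl

theorem openBox_nonempty {l u : Fin n → ℝ} (h : ∀ m, l m < u m) : (openBox l u).Nonempty :=
  ⟨WithLp.toLp 2 fun m => (l m + u m) / 2, fun m => by
    constructor <;> linarith [h m]⟩

theorem isOpen_openBox (l u : Fin n → ℝ) : IsOpen (openBox l u) := by
  rw [openBox_eq_preimage]
  exact (isOpen_set_pi finite_univ fun m _ => isOpen_Ioo).preimage (PiLp.continuous_ofLp 2 _)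

theorem convex_closedBox (l u : Fin n → ℝ) : Convex ℝ (closedBox l u) := by
  rw [closedBox_eq_preimage]
  exact (convex_pi fun m _ => convex_Icc (l m) (u m)).linear_preimage
    (WithLp.linearEquiv 2 ℝ (Fin n → ℝ)).toLinearMap

theorem closure_openBox {l u : Fin n → ℝ} (h : ∀ m, l m < u m) :
    closure (openBox l u) = closedBox l u := by
  have := (PiLp.homeomorph 2 fun _ : Fin n => ℝ).preimage_closure
    (univ.pi fun m => Ioo (l m) (u m))
  rw [closure_pi_set] at this
  simp_rw [closure_Ioo (h _).ne] at this
  rw [openBox_eq_preimage, closedBox_eq_preimage]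
  exact this.symm

theorem openBox_subset_interior_closedBox (l u : Fin n → ℝ) :
    openBox l u ⊆ interior (closedBox l u) :=
  interior_maximal (fun _ hx m => ⟨(hx m).1.le, (hx m).2.le⟩) (isOpen_openBox l u)

theorem closedBox_subset_closure_interior {l u : Fin n → ℝ} (h : ∀ m, l m < u m) :
    closedBox l u ⊆ closure (interior (closedBox l u)) :=
  (closure_openBox h).symm.subset.trans (closure_mono (openBox_subset_interior_closedBox l u))

end Boxes

section Dyadic

variable {n : ℕ}

theorem dyadicCube_eq_closedBox (k : ℕ) (j : Fin n → ℤ) :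
    dyadicCube n k j =
      closedBox (fun m => (j m : ℝ) / 2 ^ k) (fun m => ((j m : ℝ) + 1) / 2 ^ k) := rfl

theorem div_two_pow_lt_add_one_div_two_pow (k : ℕ) (a : ℤ) :
    (a : ℝ) / 2 ^ k < ((a : ℝ) + 1) / 2 ^ k :=
  div_lt_div_of_pos_right (lt_add_one _) (by positivity)

theorem interior_dyadicCube_nonempty (k : ℕ) (j : Fin n → ℤ) :
    (interior (dyadicCube n k j)).Nonempty :=
  (openBox_nonempty fun m => div_two_pow_lt_add_one_div_two_pow k (j m)).mono
    (openBox_subset_interior_closedBox _ _)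

theorem exists_int_mem_Icc_of_div_le_of_le_div {c s : ℝ} (hc : 0 < c) {lo hi : ℤ} (h : lo ≤ hi)
    (hs : (lo : ℝ) / c ≤ s ∧ s ≤ ((hi : ℝ) + 1) / c) :
    ∃ j ∈ Icc lo hi, (j : ℝ) / c ≤ s ∧ s ≤ ((j : ℝ) + 1) / c := by
  simp only [div_le_iff₀' hc, le_div_iff₀' hc] at hs ⊢
  have hlo : lo ≤ ⌊c * s⌋ := Int.le_floor.2 hs.1
  rcases le_total hi ⌊c * s⌋ with hle | hle
  · refine ⟨hi, ⟨h, le_rfl⟩, ?_, hs.2⟩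
    exact (Int.cast_le.2 hle).trans (Int.floor_le _)
  · exact ⟨⌊c * s⌋, ⟨hlo, hle⟩, Int.floor_le _, (Int.lt_floor_add_one _).le⟩

theorem closedBox_eq_iUnion_dyadicCube (k : ℕ) {lo hi : Fin n → ℤ} (h : lo ≤ hi) :
    closedBox (fun m => (lo m : ℝ) / 2 ^ k) (fun m => ((hi m : ℝ) + 1) / 2 ^ k) =
      ⋃ j ∈ Icc lo hi, dyadicCube n k j := by
  ext x
  simp only [mem_iUnion, exists_prop]
  constructor
  · intro hx
    choose j hj hxj using fun m =>
      exists_int_mem_Icc_of_div_le_of_le_div (by positivity) (h m) (hx m)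
    exact ⟨j, ⟨fun m => (hj m).1, fun m => (hj m).2⟩, hxj⟩
  · rintro ⟨j, ⟨hlo, hhi⟩, hx⟩ m
    have hlo' : (lo m : ℝ) ≤ j m := by exact_mod_cast hlo m
    have hhi' : (j m : ℝ) ≤ hi m := by exact_mod_cast hhi m
    refine ⟨le_trans ?_ (hx m).1, (hx m).2.trans ?_⟩ <;> dsimp only <;> gcongr

theorem drawnOn_closedBox (k : ℕ) {lo hi : Fin n → ℤ} (h : lo ≤ hi) :
    DrawnOn n k (closedBox (fun m => (lo m : ℝ) / 2 ^ k) (fun m => ((hi m : ℝ) + 1) / 2 ^ k)) :=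
  ⟨_, closedBox_eq_iUnion_dyadicCube k h⟩

theorem drawnOn_dyadicCube_succ (k : ℕ) (j : Fin n → ℤ) :
    DrawnOn n (k + 1) (dyadicCube n k j) := by
  rw [dyadicCube_eq_closedBox]
  convert drawnOn_closedBox (k + 1) (lo := fun m => 2 * j m) (hi := fun m => 2 * j m + 1)
    (fun m => by dsimp only; omega) using 2 <;> funext m <;> push_cast <;> rw [pow_succ] <;>
    field_simp; ring

theorem DrawnOn.iUnion {k : ℕ} {ι : Sort*} {s : ι → Set (EuclideanSpace ℝ (Fin n))}
    (h : ∀ i, DrawnOn n k (s i)) : DrawnOn n k (⋃ i, s i) := by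
  choose 𝒬 h𝒬 using h
  exact ⟨⋃ i, 𝒬 i, by rw [biUnion_iUnion]; exact iUnion_congr h𝒬⟩

theorem DrawnOn.union {k : ℕ} {Q R : Set (EuclideanSpace ℝ (Fin n))} (hQ : DrawnOn n k Q)
    (hR : DrawnOn n k R) : DrawnOn n k (Q ∪ R) := by
  obtain ⟨𝒬, rfl⟩ := hQ
  obtain ⟨ℛ, rfl⟩ := hR
  exact ⟨𝒬 ∪ ℛ, (biUnion_union 𝒬 ℛ _).symm⟩

theorem DrawnOn.succ {k : ℕ} {Q : Set (EuclideanSpace ℝ (Fin n))} (h : DrawnOn n k Q) :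
    DrawnOn n (k + 1) Q := by
  obtain ⟨𝒬, rfl⟩ := h
  exact DrawnOn.iUnion fun j => DrawnOn.iUnion fun _ => drawnOn_dyadicCube_succ k j

theorem DrawnOn.mono {k k' : ℕ} {Q : Set (EuclideanSpace ℝ (Fin n))} (h : DrawnOn n k Q)
    (hk : k ≤ k') : DrawnOn n k' Q := by
  induction k', hk using Nat.le_induction with
  | base => exact h
  | succ k' _ ih => exact ih.succ

theorem DrawnOn.subset_closure_interior {k : ℕ} {Q : Set (EuclideanSpace ℝ (Fin n))}
    (h : DrawnOn n k Q) : Q ⊆ closure (interior Q) := by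
  obtain ⟨𝒬, rfl⟩ := h
  refine iUnion₂_subset fun j hj => ?_
  calc dyadicCube n k j ⊆ closure (interior (dyadicCube n k j)) :=
        closedBox_subset_closure_interior fun m => div_two_pow_lt_add_one_div_two_pow k (j m)
    _ ⊆ _ := closure_mono (interior_mono (subset_biUnion_of_mem hj))

/-- The union of the `3ⁿ` cubes of `Π_k` around the one containing `y`. -/
def dyadicNbhd (k : ℕ) (y : EuclideanSpace ℝ (Fin n)) : Set (EuclideanSpace ℝ (Fin n)) :=
  closedBox (fun m => ((⌊2 ^ k * y m⌋ - 1 : ℤ) : ℝ) / 2 ^ k)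
    (fun m => (((⌊2 ^ k * y m⌋ + 1 : ℤ) : ℝ) + 1) / 2 ^ k)

theorem drawnOn_dyadicNbhd (k : ℕ) (y : EuclideanSpace ℝ (Fin n)) :
    DrawnOn n k (dyadicNbhd k y) :=
  drawnOn_closedBox k fun m => by dsimp only; omega

theorem mem_interior_dyadicNbhd (k : ℕ) (y : EuclideanSpace ℝ (Fin n)) :
    y ∈ interior (dyadicNbhd k y) := by
  refine openBox_subset_interior_closedBox _ _ fun m => ?_
  have hk : (0 : ℝ) < 2 ^ k := by positivity
  have h₁ := Int.floor_le (2 ^ k * y m)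
  have h₂ := Int.lt_floor_add_one (2 ^ k * y m)
  simp only [div_lt_iff₀' hk, lt_div_iff₀' hk]
  push_cast
  constructor <;> linarith

theorem dist_ofLp_le_of_mem_dyadicNbhd {k : ℕ} {x y : EuclideanSpace ℝ (Fin n)}
    (hx : x ∈ dyadicNbhd k y) : dist (WithLp.ofLp x) (WithLp.ofLp y) ≤ 2 / 2 ^ k := by
  have hk : (0 : ℝ) < 2 ^ k := by positivity
  refine (dist_pi_le_iff (by positivity)).2 fun m => ?_
  have h₁ := Int.floor_le (2 ^ k * y m)
  have h₂ := Int.lt_floor_add_one (2 ^ k * y m)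
  have hxm := hx m
  simp only [div_le_iff₀' hk, le_div_iff₀' hk] at hxm
  push_cast at hxm
  rw [Real.dist_eq, le_div_iff₀' hk, ← abs_of_pos hk, ← abs_mul, mul_sub, abs_le]
  constructor <;> linarith

theorem eventually_dyadicNbhd_subset {y : EuclideanSpace ℝ (Fin n)}
    {U : Set (EuclideanSpace ℝ (Fin n))} (hU : U ∈ 𝓝 y) :
    ∀ᶠ k in atTop, dyadicNbhd k y ⊆ U := by
  obtain ⟨r, hr, hball⟩ := Metric.mem_nhds_iff.1 hU
  obtain ⟨K, hK⟩ : ∃ K, AntilipschitzWith K (WithLp.ofLp : EuclideanSpace ℝ (Fin n) → _) :=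
    ⟨_, PiLp.antilipschitzWith_ofLp 2 _⟩
  have hlim : Tendsto (fun k : ℕ => (K : ℝ) * (2 / 2 ^ k)) atTop (𝓝 0) := by
    simpa using (tendsto_const_nhds.div_atTop
      (tendsto_pow_atTop_atTop_of_one_lt (one_lt_two : (1 : ℝ) < 2))).const_mul _
  filter_upwards [hlim.eventually (eventually_lt_nhds hr)] with k hk x hx
  exact hball ((hK.le_mul_dist x y).trans_lt
    (lt_of_le_of_lt (by gcongr; exact dist_ofLp_le_of_mem_dyadicNbhd hx) hk))

end Dyadic

namespace IsMaxDyadicApprox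

variable {n k : ℕ} {π₀ C A : Set (EuclideanSpace ℝ (Fin n))}

theorem subset_of_le (hA : IsMaxDyadicApprox n k π₀ C A) {k' : ℕ}
    {A' : Set (EuclideanSpace ℝ (Fin n))} (hA' : IsMaxDyadicApprox n k' π₀ C A') (hk : k ≤ k') :
    A ⊆ A' :=
  hA'.2.2.2.2 A (hA.1.mono hk) hA.2.1 hA.2.2.1 hA.2.2.2.1

theorem subset_of_drawnOn (hA : IsMaxDyadicApprox n k π₀ C A)
    {Q : Set (EuclideanSpace ℝ (Fin n))} (hQ : DrawnOn n k Q) (hQC : Q ⊆ C)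
    (hQc : IsPreconnected (interior Q)) (hAQ : (interior A ∩ interior Q).Nonempty) : Q ⊆ A := by
  obtain ⟨hAd, hπA, hAC, hAc, hmax⟩ := hA
  have hAQc : IsConnected (interior (A ∪ Q)) :=
    ⟨hAc.nonempty.mono (interior_mono subset_union_left),
      isPreconnected_interior_union hAd.subset_closure_interior hQ.subset_closure_interior
        hAc.isPreconnected hQc hAQ⟩
  exact subset_union_right.trans
    (hmax _ (hAd.union hQ) (hπA.trans subset_union_left) (union_subset hAC hQC) hAQc)

end IsMaxDyadicApprox

theorem IsPreconnected.subset_iUnion_interior_maxDyadicApprox {n k₀ : ℕ} {j₀ : Fin n → ℤ}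
    {C : Set (EuclideanSpace ℝ (Fin n))} (hC : IsPreconnected C) (hCo : IsOpen C)
    {A : ℕ → Set (EuclideanSpace ℝ (Fin n))}
    (hA : ∀ k, k₀ ≤ k → IsMaxDyadicApprox n k (dyadicCube n k₀ j₀) C (A k)) :
    C ⊆ ⋃ k, ⋃ (_ : k₀ ≤ k), interior (A k) := by
  obtain ⟨z₀, hz₀⟩ := interior_dyadicCube_nonempty k₀ j₀
  have hz₀A : z₀ ∈ interior (A k₀) := interior_mono (hA k₀ le_rfl).2.1 hz₀
  refine hC.subset_of_closure_inter_subset (isOpen_biUnion fun _ _ => isOpen_interior)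
    ⟨z₀, interior_subset.trans (hA k₀ le_rfl).2.2.1 hz₀A, mem_iUnion₂.2 ⟨k₀, le_rfl, hz₀A⟩⟩ ?_
  rintro y ⟨hyV, hyC⟩
  obtain ⟨K, hKC, hK⟩ :=
    ((eventually_dyadicNbhd_subset (hCo.mem_nhds hyC)).and (eventually_ge_atTop k₀)).exists
  obtain ⟨z, hzN, hzV⟩ :=
    mem_closure_iff.1 hyV _ isOpen_interior (mem_interior_dyadicNbhd K y)
  obtain ⟨k, hk, hzA⟩ := mem_iUnion₂.1 hzV
  have hK' : k₀ ≤ max K k := hK.trans (le_max_left _ _)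
  have hzA' : z ∈ interior (A (max K k)) :=
    interior_mono ((hA k hk).subset_of_le (hA _ hK') (le_max_right _ _)) hzA
  have hNA : dyadicNbhd K y ⊆ A (max K k) :=
    (hA _ hK').subset_of_drawnOn ((drawnOn_dyadicNbhd K y).mono (le_max_left _ _)) hKC
      (convex_closedBox _ _).interior.isPreconnected ⟨z, hzA', hzN⟩
  exact mem_iUnion₂.2 ⟨_, hK', interior_mono hNA (mem_interior_dyadicNbhd K y)⟩

theorem stmt0_general {n : ℕ} {M : Type*} (Ω : Set (EuclideanSpace ℝ (Fin n))) (hΩ : IsOpen Ω)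
    (C : M → Set (EuclideanSpace ℝ (Fin n)))
    (hcomp : ∀ m, ∃ x ∈ Ω, C m = connectedComponentIn Ω x)
    (hcover : ∀ x ∈ Ω, ∃ m, x ∈ C m)
    (km : M → ℕ) (π : M → Fin n → ℤ)
    (A : M → ℕ → Set (EuclideanSpace ℝ (Fin n)))
    (hA : ∀ m k, km m ≤ k →
      IsMaxDyadicApprox n k (dyadicCube n (km m) (π m)) (C m) (A m k))
    (Ωsq : ℕ → Set (EuclideanSpace ℝ (Fin n)))
    (hΩsq : ∀ k, Ωsq k = interior (⋃ m, ⋃ (_ : km m ≤ k), A m k)) :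
    Monotone Ωsq ∧ (∀ k, IsOpen (Ωsq k) ∧ Ωsq k ⊆ Ω) ∧ (⋃ k, Ωsq k) = Ω ∧
      ∀ x, Tendsto (fun k => (Ωsq k).indicator (fun _ => (1 : ℝ)) x) atTop
        (nhds (Ω.indicator (fun _ => (1 : ℝ)) x)) := by
  have hmono : Monotone Ωsq := fun k k' hk => by
    rw [hΩsq, hΩsq]
    exact interior_mono (iUnion₂_mono' fun m hm =>
      ⟨m, hm.trans hk, (hA m k hm).subset_of_le (hA m k' (hm.trans hk)) hk⟩)
  have hsub : ∀ k, Ωsq k ⊆ Ω := fun k => by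
    rw [hΩsq]
    refine interior_subset.trans (iUnion₂_subset fun m hm => (hA m k hm).2.2.1.trans ?_)
    obtain ⟨x, -, hx⟩ := hcomp m
    exact hx ▸ connectedComponentIn_subset Ω x
  have hunion : (⋃ k, Ωsq k) = Ω := by
    refine (iUnion_subset hsub).antisymm fun x hx => ?_
    obtain ⟨m, hm⟩ := hcover x hx
    obtain ⟨y, -, hy⟩ := hcomp m
    have hCm := isPreconnected_connectedComponentIn.subset_iUnion_interior_maxDyadicApprox
      hΩ.connectedComponentIn (hy ▸ hA m)
    obtain ⟨k, hk, hxk⟩ := mem_iUnion₂.1 (hCm (hy ▸ hm))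
    exact mem_iUnion.2
      ⟨k, hΩsq k ▸ interior_mono (subset_iUnion₂ (s := fun m _ => A m k) m hk) hxk⟩
  refine ⟨hmono, fun k => ⟨hΩsq k ▸ isOpen_interior, hsub k⟩, hunion, fun x => ?_⟩
  have := hmono.tendsto_indicator Ωsq (fun _ => (1 : ℝ)) x
  rw [hunion] at this
  exact this.mono_right (pure_le_nhds _)

/-- The dyadic approximations of an arbitrary open set `Ω`, rooted in a fixed
family of cubes (one per connected component), form a non-decreasing sequence of open subsets
of `Ω` whose union is `Ω`; in particular the characteristic functions converge pointwise. -/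
theorem stmt0 {n : ℕ} {M : Type*} (Ω : Set (EuclideanSpace ℝ (Fin n))) (hΩ : IsOpen Ω)
    (C : M → Set (EuclideanSpace ℝ (Fin n)))
    (hcomp : ∀ m, ∃ x ∈ Ω, C m = connectedComponentIn Ω x)
    (hcover : ∀ x ∈ Ω, ∃ m, x ∈ C m)
    (km : M → ℕ) (π : M → Fin n → ℤ)
    (hroot : ∀ m, dyadicCube n (km m) (π m) ⊆ C m)
    (A : M → ℕ → Set (EuclideanSpace ℝ (Fin n)))
    (hA : ∀ m k, km m ≤ k →
      IsMaxDyadicApprox n k (dyadicCube n (km m) (π m)) (C m) (A m k))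
    (Ωsq : ℕ → Set (EuclideanSpace ℝ (Fin n)))
    (hΩsq : ∀ k, Ωsq k = interior (⋃ m, ⋃ (_ : km m ≤ k), A m k)) :
    Monotone Ωsq ∧ (∀ k, IsOpen (Ωsq k) ∧ Ωsq k ⊆ Ω) ∧ (⋃ k, Ωsq k) = Ω ∧
      ∀ x, Tendsto (fun k => (Ωsq k).indicator (fun _ => (1 : ℝ)) x) atTop
        (nhds (Ω.indicator (fun _ => (1 : ℝ)) x)) :=
  stmt0_general Ω hΩ C hcomp hcover km π A hA Ωsq hΩsq
end
end

section
/- Let (H_k) and (V_k) be sequences of Hilbert spaces converging to Hilbert spaces H and V through (H, (T_k)) and (V, (R_k)) respectively. Let L_k : H_k → V_k and L : H → V be bounded linear invertible operators such that the inverses L_k^{-1} are uniformly bounded in operator norm. If L_k converges to L (in the sense that strongly convergent sequences u_k → u through (T_k) imply L_k u_k → L u through (R_k)), then L_k^{-1} converges to L^{-1} in the same sense (with the roles of (T_k) and (R_k) exchanged). -/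
open Filter Topology

noncomputable section

/-- Convergence of a sequence of Hilbert spaces `H_k` to `H` through `(H, (T_k))`. -/
def HilbertSpacesCV {H : Type*} [NormedAddCommGroup H] [InnerProductSpace ℝ H]
    {Hk : ℕ → Type*} [∀ k, NormedAddCommGroup (Hk k)] [∀ k, InnerProductSpace ℝ (Hk k)]
    (T : ∀ k, H →ₗ[ℝ] Hk k) : Prop :=
  ∀ f : H, Tendsto (fun k => ‖T k f‖) atTop (nhds ‖f‖)

/-- Strong convergence of vectors `u_k ∈ H_k` to `l ∈ H` through `(T_k)`. -/
def SCV {H : Type*} [NormedAddCommGroup H] [InnerProductSpace ℝ H]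
    {Hk : ℕ → Type*} [∀ k, NormedAddCommGroup (Hk k)] [∀ k, InnerProductSpace ℝ (Hk k)]
    (T : ∀ k, H →ₗ[ℝ] Hk k) (u : ∀ k, Hk k) (l : H) : Prop :=
  Tendsto (fun k => ‖T k l - u k‖) atTop (nhds 0)

/-- Convergence of bounded operators `L_k : H_k → V_k` to `L : H → V` along converging
sequences of Hilbert spaces: strongly convergent sequences are mapped to strongly
convergent sequences. -/
def OpCV {H V : Type*} [NormedAddCommGroup H] [InnerProductSpace ℝ H]
    [NormedAddCommGroup V] [InnerProductSpace ℝ V]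
    {Hk Vk : ℕ → Type*} [∀ k, NormedAddCommGroup (Hk k)] [∀ k, InnerProductSpace ℝ (Hk k)]
    [∀ k, NormedAddCommGroup (Vk k)] [∀ k, InnerProductSpace ℝ (Vk k)]
    (T : ∀ k, H →ₗ[ℝ] Hk k) (R : ∀ k, V →ₗ[ℝ] Vk k)
    (L : ∀ k, Hk k →L[ℝ] Vk k) (L' : H →L[ℝ] V) : Prop :=
  ∀ (u : ∀ k, Hk k) (l : H), SCV T u l → SCV R (fun k => L k (u k)) (L' l)

/-- If `H_k → H` through `(T_k)` and `V_k → V` through `(R_k)`, the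
invertible bounded operators `L_k : H_k → V_k` have uniformly bounded inverses and converge
to the invertible bounded operator `L : H → V`, then `L_k⁻¹` converges to `L⁻¹` (with the
roles of `(T_k)` and `(R_k)` exchanged). -/
theorem stmt5 {H V : Type*} [NormedAddCommGroup H] [InnerProductSpace ℝ H] [CompleteSpace H]
    [NormedAddCommGroup V] [InnerProductSpace ℝ V] [CompleteSpace V]
    {Hk Vk : ℕ → Type*} [∀ k, NormedAddCommGroup (Hk k)] [∀ k, InnerProductSpace ℝ (Hk k)]
    [∀ k, CompleteSpace (Hk k)]
    [∀ k, NormedAddCommGroup (Vk k)] [∀ k, InnerProductSpace ℝ (Vk k)]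
    [∀ k, CompleteSpace (Vk k)]
    (T : ∀ k, H →ₗ[ℝ] Hk k) (R : ∀ k, V →ₗ[ℝ] Vk k)
    (hT : HilbertSpacesCV T) (hR : HilbertSpacesCV R)
    (L : ∀ k, Hk k ≃L[ℝ] Vk k) (L' : H ≃L[ℝ] V)
    (hbdd : ∃ C : ℝ, ∀ k, ‖((L k).symm : Vk k →L[ℝ] Hk k)‖ ≤ C)
    (hCV : OpCV T R (fun k => ((L k : Hk k →L[ℝ] Vk k))) (L' : H →L[ℝ] V)) :
    OpCV R T (fun k => ((L k).symm : Vk k →L[ℝ] Hk k)) ((L'.symm : V →L[ℝ] H)) := by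
  intro u l hu
  obtain ⟨C, hC⟩ := hbdd
  have hC0 : (0:ℝ) ≤ C := le_trans (norm_nonneg _) (hC 0)
  set f := L'.symm l with hf
  have h1 : SCV T (fun k => T k f) f := by
    simp [SCV, sub_self, tendsto_const_nhds]
  have h2 := hCV _ _ h1
  have hLf : (L' : H →L[ℝ] V) f = l := L'.apply_symm_apply l
  rw [hLf] at h2
  -- h2 : Tendsto (fun k => ‖R k l - L k (T k f)‖) atTop (nhds 0)
  have key : ∀ k, ‖T k f - ((L k).symm : Vk k →L[ℝ] Hk k) (u k)‖
      ≤ C * (‖R k l - (L k) (T k f)‖ + ‖R k l - u k‖) := by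
    intro k
    have heq : T k f - ((L k).symm : Vk k →L[ℝ] Hk k) (u k)
        = ((L k).symm : Vk k →L[ℝ] Hk k) ((L k) (T k f) - u k) := by
      simp [map_sub]
    rw [heq]
    calc ‖((L k).symm : Vk k →L[ℝ] Hk k) ((L k) (T k f) - u k)‖
        ≤ ‖((L k).symm : Vk k →L[ℝ] Hk k)‖ * ‖(L k) (T k f) - u k‖ :=
          ContinuousLinearMap.le_opNorm _ _
      _ ≤ C * ‖(L k) (T k f) - u k‖ := by
          gcongr
          exact hC k
      _ ≤ C * (‖R k l - (L k) (T k f)‖ + ‖R k l - u k‖) := by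
          gcongr
          have heq2 : (L k) (T k f) - u k = -(R k l - (L k) (T k f)) + (R k l - u k) := by
            abel
          rw [heq2]
          exact (norm_add_le _ _).trans (by rw [norm_neg])
  have hlim : Tendsto (fun k => C * (‖R k l - (L k) (T k f)‖ + ‖R k l - u k‖)) atTop (nhds 0) := by
    have := (h2.add hu).const_mul C
    simpa using this
  refine squeeze_zero (fun k => norm_nonneg _) key hlim

end
end

section
/- Let Ω be an admissible domain of ℝⁿ and (Ω_k)_{k∈ℕ} a non-decreasing sequence of admissible domains with union Ω. Then the union ⋃_k Ḣ¹₀(Ω_k) (each Ḣ¹₀(Ω_k) viewed inside Ḣ¹₀(Ω) via extension by zero) is a dense subspace of Ḣ¹₀(Ω). -/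
open Filter Topology MeasureTheory Set

noncomputable section

variable {n : ℕ}

/-- Smooth functions compactly supported in an open set `U`. -/
def SmoothCpt (U : Set (EuclideanSpace ℝ (Fin n))) (φ : EuclideanSpace ℝ (Fin n) → ℝ) :
    Prop :=
  ContDiff ℝ (⊤ : ℕ∞) φ ∧ HasCompactSupport φ ∧ tsupport φ ⊆ U

/-- Finiteness of the Dirichlet energy on `U` (membership in `Ḣ¹(U)`). -/
def GradL2On (U : Set (EuclideanSpace ℝ (Fin n))) (u : EuclideanSpace ℝ (Fin n) → ℝ) :
    Prop :=
  IntegrableOn (fun x => ‖gradient u x‖ ^ 2) U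

/-- Membership in `Ḣ¹₀(U)`: approximability by smooth compactly supported functions in the
homogeneous `Ḣ¹(U)` seminorm. -/
def H10mem (U : Set (EuclideanSpace ℝ (Fin n))) (φ : EuclideanSpace ℝ (Fin n) → ℝ) : Prop :=
  ∀ ε > (0 : ℝ), ∃ ψ, SmoothCpt U ψ ∧ ∫ x in U, ‖gradient φ x - gradient ψ x‖ ^ 2 < ε

/-- The (1,2)-capacity of a set `K ⊆ ℝⁿ`, relative to `H¹(ℝⁿ)`. -/
def capacity (K : Set (EuclideanSpace ℝ (Fin n))) : ℝ :=
  sInf {c | ∃ u : EuclideanSpace ℝ (Fin n) → ℝ, ContDiff ℝ (⊤ : ℕ∞) u ∧ HasCompactSupport u ∧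
    (∀ x ∈ K, 1 ≤ u x) ∧ c = ∫ x, (‖gradient u x‖ ^ 2 + u x ^ 2)}

/-- An admissible domain: a domain (equal to the interior of its closure) with the
`Ḣ¹`-extension property, whose boundary is compact and of positive capacity. -/
structure AdmissibleDomain (Ω : Set (EuclideanSpace ℝ (Fin n))) : Prop where
  isOpen : IsOpen Ω
  nonempty : Ω.Nonempty
  connected : IsConnected Ω
  regular : Ω = interior (closure Ω)
  compactBdry : IsCompact (frontier Ω)
  posCapBdry : 0 < capacity (frontier Ω)
  extension : ∃ C : ℝ, 0 < C ∧ ∀ u : EuclideanSpace ℝ (Fin n) → ℝ, GradL2On Ω u →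
    ∃ v : EuclideanSpace ℝ (Fin n) → ℝ, Set.EqOn v u Ω ∧ GradL2On Set.univ v ∧
      ∫ x, ‖gradient v x‖ ^ 2 ≤ C * ∫ x in Ω, ‖gradient u x‖ ^ 2

/-- If `Ω_k ↗ Ω` is a non-decreasing sequence of admissible domains with
union the admissible domain `Ω`, then `⋃_k Ḣ¹₀(Ω_k)` (extension by zero) is dense in
`Ḣ¹₀(Ω)`. -/
theorem stmt9 (Ω : Set (EuclideanSpace ℝ (Fin n))) (hΩ : AdmissibleDomain Ω)
    (Ωk : ℕ → Set (EuclideanSpace ℝ (Fin n))) (hk : ∀ k, AdmissibleDomain (Ωk k))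
    (hmono : Monotone Ωk) (hunion : (⋃ k, Ωk k) = Ω)
    (u : EuclideanSpace ℝ (Fin n) → ℝ) (huL2 : GradL2On Ω u) (hu0 : H10mem Ω u) :
    ∀ ε > (0 : ℝ), ∃ k, ∃ v : EuclideanSpace ℝ (Fin n) → ℝ,
      H10mem (Ωk k) v ∧ (∀ x ∉ Ωk k, v x = 0) ∧
        ∫ x in Ω, ‖gradient u x - gradient v x‖ ^ 2 < ε := by
  intro ε hε
  obtain ⟨ψ, ⟨hsm, hcs, hsupp⟩, hint⟩ := hu0 ε hε
  -- tsupport ψ is compact and covered by the open sets Ωk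
  have hcover : tsupport ψ ⊆ ⋃ k, Ωk k := by rw [hunion]; exact hsupp
  obtain ⟨s, hs⟩ := hcs.elim_finite_subcover Ωk (fun k => (hk k).isOpen) hcover
  refine ⟨s.sup id, ψ, ?_, ?_, hint⟩
  · intro δ hδ
    refine ⟨ψ, ⟨hsm, hcs, ?_⟩, ?_⟩
    · intro x hx
      obtain ⟨i, his, hxi⟩ := mem_iUnion₂.mp (hs hx)
      exact hmono (Finset.le_sup (f := id) his) hxi
    · simpa using hδ
  · intro x hx
    by_contra hne
    apply hx
    have hxs : x ∈ tsupport ψ := subset_tsupport ψ (by simpa using hne)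
    obtain ⟨i, his, hxi⟩ := mem_iUnion₂.mp (hs hxs)
    exact hmono (Finset.le_sup (f := id) his) hxi

end
end

section
/- Let Ω be a two-sided admissible domain of ℝⁿ. Then on the trace space 𝔅(∂Ω), the interior and exterior trace norms are equivalent with optimal constants: ‖f‖_{Tr_i} ≤ √(‖Ė_{Ω̄ᶜ}‖² − 1)·‖f‖_{Tr_e} and ‖f‖_{Tr_e} ≤ √(‖Ė_Ω‖² − 1)·‖f‖_{Tr_i}, where Ė_Ω and Ė_{Ω̄ᶜ} are the Dirichlet harmonic extension operators (harmonic on the complementary side). -/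
open Filter Topology RealInnerProductSpace

noncomputable section

/-- The interior trace norm on the trace space `B = 𝔅(∂Ω)`:
`‖f‖_{Tr_i} = inf {‖v‖_{Ḣ¹(Ω)} : Tr_i v = f}`. -/
def traceNormI {Hi B : Type*} [NormedAddCommGroup Hi] [InnerProductSpace ℝ Hi]
    [AddCommGroup B] [Module ℝ B] (Tri : Hi →ₗ[ℝ] B) (f : B) : ℝ :=
  sInf {r | ∃ v : Hi, Tri v = f ∧ r = ‖v‖}

/-- The exterior trace norm on the trace space `B = 𝔅(∂Ω)`:
`‖f‖_{Tr_e} = inf {‖v‖_{Ḣ¹(Ω̄ᶜ)} : Tr_e v = f}`. -/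
def traceNormE {He B : Type*} [NormedAddCommGroup He] [InnerProductSpace ℝ He]
    [AddCommGroup B] [Module ℝ B] (Tre : He →ₗ[ℝ] B) (f : B) : ℝ :=
  sInf {r | ∃ v : He, Tre v = f ∧ r = ‖v‖}

/-- The whole-space trace norm `‖f‖_{Tr} = inf {‖v‖_{Ḣ¹(ℝⁿ)} : Tr v = f}`, where `Ḣ¹(ℝⁿ)` is
realized as the pairs `(u, v) ∈ Ḣ¹(Ω) × Ḣ¹(Ω̄ᶜ)` with matching traces, with
`‖(u,v)‖² = ‖u‖² + ‖v‖²`. -/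
def traceNormRn {Hi He B : Type*} [NormedAddCommGroup Hi] [InnerProductSpace ℝ Hi]
    [NormedAddCommGroup He] [InnerProductSpace ℝ He]
    [AddCommGroup B] [Module ℝ B] (Tri : Hi →ₗ[ℝ] B) (Tre : He →ₗ[ℝ] B) (f : B) : ℝ :=
  sInf {r | ∃ (u : Hi) (v : He), Tri u = f ∧ Tre v = f ∧
    r = Real.sqrt (‖u‖ ^ 2 + ‖v‖ ^ 2)}

/-- The operator norm of a Dirichlet harmonic extension operator, e.g.
`Ė_Ω : u ↦ (u, e u) : Ḣ¹(Ω) → Ḣ¹(ℝⁿ)` where `e u` is the harmonic extension to the other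
side; `‖(u, e u)‖_{Ḣ¹(ℝⁿ)}² = ‖u‖² + ‖e u‖²`. -/
def extNorm {X Y : Type*} [NormedAddCommGroup X] [NormedAddCommGroup Y]
    [Module ℝ X] [Module ℝ Y] (e : X →ₗ[ℝ] Y) : ℝ :=
  sInf {C | 0 ≤ C ∧ ∀ u : X, Real.sqrt (‖u‖ ^ 2 + ‖e u‖ ^ 2) ≤ C * ‖u‖}

private lemma traceInf_le {H B : Type*} [NormedAddCommGroup H] [InnerProductSpace ℝ H]
    [AddCommGroup B] [Module ℝ B] (T : H →ₗ[ℝ] B) {f : B} {v : H} (hv : T v = f) :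
    sInf {r | ∃ w : H, T w = f ∧ r = ‖w‖} ≤ ‖v‖ := by
  apply csInf_le
  · exact ⟨0, by rintro r ⟨w, -, rfl⟩; positivity⟩
  · exact ⟨v, hv, rfl⟩

private lemma traceInf_eq {H B : Type*} [NormedAddCommGroup H] [InnerProductSpace ℝ H]
    [AddCommGroup B] [Module ℝ B] (T : H →ₗ[ℝ] B) {h : H}
    (hh : h ∈ (LinearMap.ker T)ᗮ) :
    sInf {r | ∃ w : H, T w = T h ∧ r = ‖w‖} = ‖h‖ := by
  refine le_antisymm (traceInf_le T rfl) (le_csInf ⟨‖h‖, h, rfl, rfl⟩ ?_)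
  rintro r ⟨w, hw, rfl⟩
  have hker : w - h ∈ LinearMap.ker T := by
    simp [LinearMap.mem_ker, map_sub, hw]
  have hinner : ⟪h, w - h⟫ = 0 := by
    have := hh (w - h) hker
    rwa [real_inner_comm] at this
  have hsq : ‖w‖ ^ 2 = ‖h‖ ^ 2 + ‖w - h‖ ^ 2 := by
    have h4 := norm_add_sq_real h (w - h)
    rw [show h + (w - h) = w by abel, hinner] at h4
    linarith
  nlinarith [norm_nonneg w, norm_nonneg h, sq_nonneg ‖w - h‖]

private lemma extNorm_spec {X Y : Type*} [NormedAddCommGroup X] [NormedAddCommGroup Y]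
    [Module ℝ X] [Module ℝ Y] (e : X →ₗ[ℝ] Y)
    (hbdd : ∃ C : ℝ, 0 ≤ C ∧ ∀ u : X, Real.sqrt (‖u‖ ^ 2 + ‖e u‖ ^ 2) ≤ C * ‖u‖) :
    0 ≤ extNorm e ∧ ∀ u : X, Real.sqrt (‖u‖ ^ 2 + ‖e u‖ ^ 2) ≤ extNorm e * ‖u‖ := by
  have hne : {C | 0 ≤ C ∧ ∀ u : X, Real.sqrt (‖u‖ ^ 2 + ‖e u‖ ^ 2) ≤ C * ‖u‖}.Nonempty :=
    ⟨hbdd.choose, hbdd.choose_spec⟩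
  have hN : 0 ≤ extNorm e := le_csInf hne (fun C hC => hC.1)
  refine ⟨hN, fun u => ?_⟩
  rcases eq_or_ne u 0 with rfl | hu
  · simp
  · have hupos : (0 : ℝ) < ‖u‖ := norm_pos_iff.mpr hu
    rw [← div_le_iff₀ hupos] at *
    exact le_csInf hne (fun C hC => (div_le_iff₀ hupos).mpr (hC.2 u))

/-- `‖e u‖ ≤ √(extNorm e² − 1) ‖u‖`. -/
private lemma ext_bound {X Y : Type*} [NormedAddCommGroup X] [NormedAddCommGroup Y]
    [Module ℝ X] [Module ℝ Y] (e : X →ₗ[ℝ] Y)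
    (hbdd : ∃ C : ℝ, 0 ≤ C ∧ ∀ u : X, Real.sqrt (‖u‖ ^ 2 + ‖e u‖ ^ 2) ≤ C * ‖u‖) (u : X) :
    ‖e u‖ ≤ Real.sqrt (extNorm e ^ 2 - 1) * ‖u‖ := by
  obtain ⟨hN, hb⟩ := extNorm_spec e hbdd
  rcases eq_or_ne u 0 with rfl | hu
  · simp [Real.sqrt_nonneg]
  · have hupos : (0 : ℝ) < ‖u‖ := norm_pos_iff.mpr hu
    have h1 : ‖u‖ ^ 2 + ‖e u‖ ^ 2 ≤ (extNorm e * ‖u‖) ^ 2 := by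
      have := hb u
      nlinarith [Real.sq_sqrt (by positivity : (0:ℝ) ≤ ‖u‖ ^ 2 + ‖e u‖ ^ 2),
        Real.sqrt_nonneg (‖u‖ ^ 2 + ‖e u‖ ^ 2)]
    have h2 : ‖e u‖ ^ 2 ≤ (extNorm e ^ 2 - 1) * ‖u‖ ^ 2 := by nlinarith
    have h3 : (0:ℝ) ≤ extNorm e ^ 2 - 1 := by nlinarith [sq_nonneg ‖e u‖, mul_pos hupos hupos]
    calc ‖e u‖ = Real.sqrt (‖e u‖ ^ 2) := by rw [Real.sqrt_sq (norm_nonneg _)]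
      _ ≤ Real.sqrt ((extNorm e ^ 2 - 1) * ‖u‖ ^ 2) := Real.sqrt_le_sqrt h2
      _ = Real.sqrt (extNorm e ^ 2 - 1) * ‖u‖ := by
          rw [Real.sqrt_mul h3, Real.sqrt_sq (norm_nonneg _)]

/-- Direction: `inf over H₁ ≤ √(extNorm e²−1) · inf over H₂` where `e : H₂ → H₁`. -/
private lemma trace_dir {H₁ H₂ B : Type*}
    [NormedAddCommGroup H₁] [InnerProductSpace ℝ H₁]
    [NormedAddCommGroup H₂] [InnerProductSpace ℝ H₂]
    [AddCommGroup B] [Module ℝ B]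
    (T₁ : H₁ →ₗ[ℝ] B) (T₂ : H₂ →ₗ[ℝ] B) (hsurj : Function.Surjective T₂)
    (e : H₂ →ₗ[ℝ] H₁) (he : ∀ v : H₂, T₁ (e v) = T₂ v)
    (hbdd : ∃ C : ℝ, 0 ≤ C ∧ ∀ v : H₂, Real.sqrt (‖v‖ ^ 2 + ‖e v‖ ^ 2) ≤ C * ‖v‖)
    (f : B) :
    sInf {r | ∃ w : H₁, T₁ w = f ∧ r = ‖w‖} ≤
      Real.sqrt (extNorm e ^ 2 - 1) * sInf {r | ∃ w : H₂, T₂ w = f ∧ r = ‖w‖} := by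
  set s := Real.sqrt (extNorm e ^ 2 - 1) with hs
  have hs0 : 0 ≤ s := Real.sqrt_nonneg _
  obtain ⟨v₀, hv₀⟩ := hsurj f
  have key : ∀ v : H₂, T₂ v = f →
      sInf {r | ∃ w : H₁, T₁ w = f ∧ r = ‖w‖} ≤ s * ‖v‖ := by
    intro v hv
    calc sInf {r | ∃ w : H₁, T₁ w = f ∧ r = ‖w‖} ≤ ‖e v‖ :=
          traceInf_le T₁ (by rw [he v, hv])
      _ ≤ s * ‖v‖ := ext_bound e hbdd v
  rcases eq_or_lt_of_le hs0 with hz | hpos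
  · have := key v₀ hv₀
    rw [← hz] at this ⊢
    simpa using this
  · rw [← div_le_iff₀' hpos]
    refine le_csInf ⟨‖v₀‖, v₀, hv₀, rfl⟩ ?_
    rintro r ⟨v, hv, rfl⟩
    rw [div_le_iff₀' hpos]
    exact key v hv

/-- Optimality direction. -/
private lemma trace_opt {H₁ H₂ B : Type*}
    [NormedAddCommGroup H₁] [InnerProductSpace ℝ H₁]
    [NormedAddCommGroup H₂] [InnerProductSpace ℝ H₂]
    [AddCommGroup B] [Module ℝ B]
    (T₁ : H₁ →ₗ[ℝ] B) (T₂ : H₂ →ₗ[ℝ] B)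
    (e : H₂ →ₗ[ℝ] H₁) (he : ∀ v : H₂, e v ∈ (LinearMap.ker T₁)ᗮ ∧ T₁ (e v) = T₂ v)
    (c : ℝ) (hc : 0 ≤ c)
    (hle : ∀ f : B, sInf {r | ∃ w : H₁, T₁ w = f ∧ r = ‖w‖} ≤
      c * sInf {r | ∃ w : H₂, T₂ w = f ∧ r = ‖w‖}) :
    Real.sqrt (extNorm e ^ 2 - 1) ≤ c := by
  have hbound : ∀ v : H₂, ‖e v‖ ≤ c * ‖v‖ := by
    intro v
    have h1 : sInf {r | ∃ w : H₁, T₁ w = T₂ v ∧ r = ‖w‖} = ‖e v‖ := by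
      have := traceInf_eq T₁ (he v).1
      rwa [(he v).2] at this
    have h2 : sInf {r | ∃ w : H₂, T₂ w = T₂ v ∧ r = ‖w‖} ≤ ‖v‖ := traceInf_le T₂ rfl
    calc ‖e v‖ = sInf {r | ∃ w : H₁, T₁ w = T₂ v ∧ r = ‖w‖} := h1.symm
      _ ≤ c * sInf {r | ∃ w : H₂, T₂ w = T₂ v ∧ r = ‖w‖} := hle (T₂ v)
      _ ≤ c * ‖v‖ := by exact mul_le_mul_of_nonneg_left h2 hc
  have hmem : Real.sqrt (1 + c ^ 2) ∈
      {C | 0 ≤ C ∧ ∀ v : H₂, Real.sqrt (‖v‖ ^ 2 + ‖e v‖ ^ 2) ≤ C * ‖v‖} := by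
    refine ⟨Real.sqrt_nonneg _, fun v => ?_⟩
    calc Real.sqrt (‖v‖ ^ 2 + ‖e v‖ ^ 2)
        ≤ Real.sqrt ((1 + c ^ 2) * ‖v‖ ^ 2) := by
          apply Real.sqrt_le_sqrt
          nlinarith [hbound v, norm_nonneg (e v), norm_nonneg v, mul_nonneg hc (norm_nonneg v)]
      _ = Real.sqrt (1 + c ^ 2) * ‖v‖ := by
          rw [Real.sqrt_mul (by positivity), Real.sqrt_sq (norm_nonneg _)]
  have hN : extNorm e ≤ Real.sqrt (1 + c ^ 2) :=
    csInf_le ⟨0, fun C hC => hC.1⟩ hmem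
  have hN0 : 0 ≤ extNorm e := le_csInf ⟨_, hmem⟩ (fun C hC => hC.1)
  have hsq : extNorm e ^ 2 ≤ 1 + c ^ 2 := by
    have := pow_le_pow_left₀ hN0 hN 2
    rwa [Real.sq_sqrt (by positivity)] at this
  calc Real.sqrt (extNorm e ^ 2 - 1) ≤ Real.sqrt (c ^ 2) :=
        Real.sqrt_le_sqrt (by linarith)
    _ = c := Real.sqrt_sq hc

/-- For a two-sided admissible domain, the interior and exterior trace norms
on `𝔅(∂Ω)` are equivalent, with optimal constants expressed through the operator norms of the
Dirichlet harmonic extension operators `Ė_Ω` (given by `u ↦ (u, eΩ u)`) and `Ė_{Ω̄ᶜ}` (given by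
`v ↦ (eΩc v, v)`). Here `Hi = Ḣ¹(Ω)`, `He = Ḣ¹(Ω̄ᶜ)`, `B = 𝔅(∂Ω)`, harmonicity on a side is
membership in the orthogonal complement of the kernel of the corresponding trace. -/
theorem stmt10 {Hi He B : Type*}
    [NormedAddCommGroup Hi] [InnerProductSpace ℝ Hi] [CompleteSpace Hi]
    [NormedAddCommGroup He] [InnerProductSpace ℝ He] [CompleteSpace He]
    [AddCommGroup B] [Module ℝ B]
    (Tri : Hi →ₗ[ℝ] B) (Tre : He →ₗ[ℝ] B)
    (hsurj_i : Function.Surjective Tri) (hsurj_e : Function.Surjective Tre)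
    (hker_i : IsClosed ((LinearMap.ker Tri : Submodule ℝ Hi) : Set Hi))
    (hker_e : IsClosed ((LinearMap.ker Tre : Submodule ℝ He) : Set He))
    (eΩ : Hi →ₗ[ℝ] He)
    (heΩ : ∀ u : Hi, eΩ u ∈ (LinearMap.ker Tre)ᗮ ∧ Tre (eΩ u) = Tri u)
    (heΩbdd : ∃ C : ℝ, 0 ≤ C ∧ ∀ u : Hi, Real.sqrt (‖u‖ ^ 2 + ‖eΩ u‖ ^ 2) ≤ C * ‖u‖)
    (eΩc : He →ₗ[ℝ] Hi)
    (heΩc : ∀ v : He, eΩc v ∈ (LinearMap.ker Tri)ᗮ ∧ Tri (eΩc v) = Tre v)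
    (heΩcbdd : ∃ C : ℝ, 0 ≤ C ∧ ∀ v : He, Real.sqrt (‖v‖ ^ 2 + ‖eΩc v‖ ^ 2) ≤ C * ‖v‖) :
    (∀ f : B, traceNormI Tri f ≤ Real.sqrt (extNorm eΩc ^ 2 - 1) * traceNormE Tre f) ∧
    (∀ f : B, traceNormE Tre f ≤ Real.sqrt (extNorm eΩ ^ 2 - 1) * traceNormI Tri f) ∧
    (∀ c : ℝ, 0 ≤ c → (∀ f : B, traceNormI Tri f ≤ c * traceNormE Tre f) →
      Real.sqrt (extNorm eΩc ^ 2 - 1) ≤ c) ∧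
    (∀ c : ℝ, 0 ≤ c → (∀ f : B, traceNormE Tre f ≤ c * traceNormI Tri f) →
      Real.sqrt (extNorm eΩ ^ 2 - 1) ≤ c) := by
  exact ⟨fun f => trace_dir Tri Tre hsurj_e eΩc (fun v => (heΩc v).2) heΩcbdd f,
    fun f => trace_dir Tre Tri hsurj_i eΩ (fun u => (heΩ u).2) heΩbdd f,
    fun c hc h => trace_opt Tri Tre eΩc heΩc c hc h,
    fun c hc h => trace_opt Tre Tri eΩ heΩ c hc h⟩

end
end

section
/- Let Ω be a two-sided admissible domain. The Neumann–Poincaré operator K_{∂Ω} satisfies: there exists c ∈ (0,1), depending only on the norms of the Dirichlet harmonic extension operators Ė_Ω and Ė_{Ω̄ᶜ}, such that for all f in the trace space, (1−c)‖f‖_{V⁻¹} ≤ ‖(±½ I + K_{∂Ω}) f‖_{V⁻¹} ≤ c‖f‖_{V⁻¹}, where ‖f‖²_{V⁻¹} = ⟨V_{∂Ω}^{-1} f, f⟩. Consequently the Neumann series Σ_{ℓ≥0} (±½ I + K_{∂Ω})^ℓ converges in operator norm with respect to ‖·‖_{V⁻¹}. -/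
/-!
Let `(u₁, u₂)` be the double layer potential of `f`, and let `p`, `q` be the whole-space harmonic
extensions of `tr_e u₂ = (½I + K)f` and `tr_i u₁ = (−½I + K)f`. Then `p − q` is the harmonic
extension of `f = tr_e u₂ − tr_i u₁`, and testing the vanishing jump of the normal derivative
of `(u₁, u₂)` against `p` and `q` gives `⟪p, q⟫ = −‖(u₁, u₂)‖²`. With `a = ‖Ė_Ω‖` and
`b = ‖Ė_{Ω̄ᶜ}‖` we have `‖p‖² ≤ b²‖u₂‖²` and `‖q‖² ≤ a²‖u₁‖²`, so expanding `‖p − q‖²`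
yields `‖p‖, ‖q‖ ≤ c‖p − q‖` with `c² = M/(M+2)`, `M = a² + b² + 1`;
the lower bounds follow from `‖p − q‖ ≤ ‖p‖ + ‖q‖`.

For the Neumann series, `tr_i` identifies the complete space `(ker tr_i)ᗮ ⊆ Ḣ¹(Ω)` with `𝔅(∂Ω)`,
with norms equivalent to `‖·‖_{V⁻¹}`; there the powers of a `‖·‖_{V⁻¹}`-contraction decay
geometrically, so the series converges in operator norm.
-/

open Filter Topology RealInnerProductSpace

noncomputable section

universe u v w

/-- The whole-space trace norm `‖f‖_{Tr} = ‖f‖_{V⁻¹} = inf {‖v‖_{Ḣ¹(ℝⁿ)} : Tr v = f}`,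
`Ḣ¹(ℝⁿ)` being realized as pairs with matching traces and `‖(u,v)‖² = ‖u‖² + ‖v‖²`. -/
def traceNormV {Hi He B : Type*} [NormedAddCommGroup Hi] [InnerProductSpace ℝ Hi]
    [NormedAddCommGroup He] [InnerProductSpace ℝ He]
    [AddCommGroup B] [Module ℝ B] (Tri : Hi →ₗ[ℝ] B) (Tre : He →ₗ[ℝ] B) (f : B) : ℝ :=
  sInf {r | ∃ (u : Hi) (v : He), Tri u = f ∧ Tre v = f ∧
    r = Real.sqrt (‖u‖ ^ 2 + ‖v‖ ^ 2)}

/-- Operator norm on `𝔅(∂Ω)` subordinate to the norm `‖·‖_{V⁻¹}`. -/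
def opNormV {Hi He B : Type*} [NormedAddCommGroup Hi] [InnerProductSpace ℝ Hi]
    [NormedAddCommGroup He] [InnerProductSpace ℝ He]
    [AddCommGroup B] [Module ℝ B] (Tri : Hi →ₗ[ℝ] B) (Tre : He →ₗ[ℝ] B)
    (A : B →ₗ[ℝ] B) : ℝ :=
  sInf {C | 0 ≤ C ∧ ∀ f : B, traceNormV Tri Tre (A f) ≤ C * traceNormV Tri Tre f}

lemma norm_le_of_mem_orthogonal_ker {E M : Type*} [NormedAddCommGroup E]
    [InnerProductSpace ℝ E] [AddCommGroup M] [Module ℝ M] {T : E →ₗ[ℝ] M} {u u' : E}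
    (hu : u ∈ (LinearMap.ker T)ᗮ) (h : T u = T u') : ‖u‖ ≤ ‖u'‖ := by
  have hker : u' - u ∈ LinearMap.ker T := by simp [h]
  have hpyth := norm_add_sq_eq_norm_sq_add_norm_sq_real
    ((Submodule.mem_orthogonal' _ _).mp hu _ hker)
  rw [add_sub_cancel] at hpyth
  exact pow_le_pow_iff_left₀ (norm_nonneg _) (norm_nonneg _) two_ne_zero |>.mp
    (by nlinarith [sq_nonneg ‖u' - u‖])

section OrthogonalKerEquiv

variable {E M : Type*} [NormedAddCommGroup E] [InnerProductSpace ℝ E] [AddCommGroup M]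
  [Module ℝ M] {T : E →ₗ[ℝ] M} [(LinearMap.ker T).HasOrthogonalProjection]

def orthogonalKerEquiv (hT : Function.Surjective T) : (LinearMap.ker T)ᗮ ≃ₗ[ℝ] M :=
  LinearEquiv.ofBijective (T ∘ₗ (LinearMap.ker T)ᗮ.subtype) ⟨by
    rw [← LinearMap.ker_eq_bot, LinearMap.ker_comp, ← Submodule.disjoint_iff_comap_eq_bot]
    exact (Submodule.orthogonal_disjoint _).symm, fun f => by
    obtain ⟨u, rfl⟩ := hT f
    obtain ⟨y, hy, z, hz, rfl⟩ := Submodule.exists_add_mem_mem_orthogonal (K := LinearMap.ker T) u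
    exact ⟨⟨z, hz⟩, by simp [LinearMap.mem_ker.mp hy]⟩⟩

@[simp]
lemma apply_orthogonalKerEquiv_symm (hT : Function.Surjective T) (f : M) :
    T ((orthogonalKerEquiv hT).symm f) = f :=
  (orthogonalKerEquiv hT).apply_symm_apply f

end OrthogonalKerEquiv

section InnerProduct

variable {E : Type*} [NormedAddCommGroup E] [InnerProductSpace ℝ E] {P p q : E} {M : ℝ}

lemma norm_le_sqrt_mul_norm_sub (hM : 0 ≤ M) (hpq : ⟪p, q⟫ = -‖P‖ ^ 2)
    (hp : ‖p‖ ^ 2 ≤ M * ‖P‖ ^ 2) : ‖p‖ ≤ √(M / (M + 2)) * ‖p - q‖ := by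
  have hsub : ‖p - q‖ ^ 2 = ‖p‖ ^ 2 + 2 * ‖P‖ ^ 2 + ‖q‖ ^ 2 := by
    rw [norm_sub_sq_real, hpq]; ring
  rw [← Real.sqrt_sq (norm_nonneg (p - q)), ← Real.sqrt_mul (by positivity)]
  refine Real.le_sqrt_of_sq_le ?_
  rw [div_mul_eq_mul_div, le_div_iff₀ (by positivity)]
  nlinarith [sq_nonneg ‖q‖]

lemma norm_sub_bounds_of_inner_eq_neg (hM : 0 ≤ M) (hpq : ⟪p, q⟫ = -‖P‖ ^ 2)
    (hp : ‖p‖ ^ 2 ≤ M * ‖P‖ ^ 2) (hq : ‖q‖ ^ 2 ≤ M * ‖P‖ ^ 2) :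
    (1 - √(M / (M + 2))) * ‖p - q‖ ≤ ‖p‖ ∧ ‖p‖ ≤ √(M / (M + 2)) * ‖p - q‖ := by
  have hq' := norm_le_sqrt_mul_norm_sub hM (q := p) (real_inner_comm p q ▸ hpq) hq
  rw [norm_sub_rev] at hq'
  exact ⟨by linarith [norm_sub_le p q], norm_le_sqrt_mul_norm_sub hM hpq hp⟩

end InnerProduct

section ExtNorm

variable {X Y : Type*} [NormedAddCommGroup X] [NormedAddCommGroup Y] [Module ℝ X] [Module ℝ Y]
  {e : X →ₗ[ℝ] Y}

lemma extNorm_nonneg : 0 ≤ extNorm e := Real.sInf_nonneg fun _ hC => hC.1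

lemma sqrt_le_extNorm_mul
    (h : ∃ C : ℝ, 0 ≤ C ∧ ∀ u : X, √(‖u‖ ^ 2 + ‖e u‖ ^ 2) ≤ C * ‖u‖) (u : X) :
    √(‖u‖ ^ 2 + ‖e u‖ ^ 2) ≤ extNorm e * ‖u‖ := by
  rcases (norm_nonneg u).eq_or_lt with hu | hu
  · simp [norm_eq_zero.mp hu.symm]
  · rw [← div_le_iff₀ hu]
    exact le_csInf h fun C hC => (div_le_iff₀ hu).mpr (hC.2 u)

end ExtNorm

section TraceNorm

variable {Hi He B : Type*} [NormedAddCommGroup Hi] [InnerProductSpace ℝ Hi]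
  [NormedAddCommGroup He] [InnerProductSpace ℝ He] [AddCommGroup B] [Module ℝ B]
  {Tri : Hi →ₗ[ℝ] B} {Tre : He →ₗ[ℝ] B} {eΩ : Hi →ₗ[ℝ] He} {eΩc : He →ₗ[ℝ] Hi} {a b : ℝ}

lemma traceNormV_nonneg (f : B) : 0 ≤ traceNormV Tri Tre f :=
  Real.sInf_nonneg (by rintro r ⟨u, v, -, -, rfl⟩; positivity)

lemma traceNormV_le_norm {f : B} {u : Hi} {v : He} (hu : Tri u = f) (hv : Tre v = f) :
    traceNormV Tri Tre f ≤ ‖WithLp.toLp 2 (u, v)‖ := by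
  rw [WithLp.prod_norm_eq_of_L2]
  exact csInf_le ⟨0, by rintro r ⟨u', v', -, -, rfl⟩; positivity⟩ ⟨u, v, hu, hv, rfl⟩

lemma traceNormV_eq_norm {f : B} {u : Hi} {v : He}
    (hu : u ∈ (LinearMap.ker Tri)ᗮ) (hv : v ∈ (LinearMap.ker Tre)ᗮ)
    (hTu : Tri u = f) (hTv : Tre v = f) :
    traceNormV Tri Tre f = ‖WithLp.toLp 2 (u, v)‖ := by
  refine (traceNormV_le_norm hTu hTv).antisymm <| le_csInf ⟨_, u, v, hTu, hTv, rfl⟩ ?_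
  rintro r ⟨u', v', hu', hv', rfl⟩
  rw [WithLp.prod_norm_eq_of_L2]
  gcongr
  exacts [norm_le_of_mem_orthogonal_ker hu (hTu.trans hu'.symm),
    norm_le_of_mem_orthogonal_ker hv (hTv.trans hv'.symm)]

lemma norm_le_traceNormV (hTre : Function.Surjective Tre) {u : Hi}
    (hu : u ∈ (LinearMap.ker Tri)ᗮ) : ‖u‖ ≤ traceNormV Tri Tre (Tri u) := by
  obtain ⟨v, hv⟩ := hTre (Tri u)
  refine le_csInf ⟨_, u, v, rfl, hv, rfl⟩ ?_
  rintro r ⟨u', v', hu', -, rfl⟩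
  exact (norm_le_of_mem_orthogonal_ker hu hu'.symm).trans
    (Real.le_sqrt_of_sq_le (by nlinarith [sq_nonneg ‖v'‖]))

lemma traceNormV_le_mul_norm (heΩ : ∀ u, Tre (eΩ u) = Tri u)
    (ha : ∀ u : Hi, √(‖u‖ ^ 2 + ‖eΩ u‖ ^ 2) ≤ a * ‖u‖) (u : Hi) :
    traceNormV Tri Tre (Tri u) ≤ a * ‖u‖ :=
  (traceNormV_le_norm rfl (heΩ u)).trans (by rw [WithLp.prod_norm_eq_of_L2]; exact ha u)

lemma traceNormV_pow_apply_le {A : Module.End ℝ B} {c : ℝ} (hc : 0 ≤ c)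
    (hA : ∀ f, traceNormV Tri Tre (A f) ≤ c * traceNormV Tri Tre f) (n : ℕ) (f : B) :
    traceNormV Tri Tre ((A ^ n) f) ≤ c ^ n * traceNormV Tri Tre f := by
  induction n generalizing f with
  | zero => simp
  | succ n ih =>
    calc traceNormV Tri Tre ((A ^ (n + 1)) f) ≤ c ^ n * traceNormV Tri Tre (A f) := by
          rw [pow_succ, Module.End.mul_apply]; exact ih _
      _ ≤ c ^ (n + 1) * traceNormV Tri Tre f := by
          rw [pow_succ, mul_assoc]; gcongr; exact hA f

lemma opNormV_nonneg (A : Module.End ℝ B) : 0 ≤ opNormV Tri Tre A :=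
  Real.sInf_nonneg fun _ hC => hC.1

lemma opNormV_le {A : Module.End ℝ B} {C : ℝ} (hC : 0 ≤ C)
    (h : ∀ f, traceNormV Tri Tre (A f) ≤ C * traceNormV Tri Tre f) : opNormV Tri Tre A ≤ C :=
  csInf_le ⟨0, fun _ hC => hC.1⟩ ⟨hC, h⟩

lemma opNormV_conj_le {V : Type*} [NormedAddCommGroup V] [NormedSpace ℝ V] (e : V ≃ₗ[ℝ] B)
    (ha : 0 ≤ a) (hlow : ∀ f, ‖e.symm f‖ ≤ traceNormV Tri Tre f)
    (hup : ∀ u, traceNormV Tri Tre (e u) ≤ a * ‖u‖) (X : V →L[ℝ] V) :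
    opNormV Tri Tre (e.conjRingEquiv (X : Module.End ℝ V)) ≤ a * ‖X‖ :=
  opNormV_le (by positivity) fun f =>
    calc traceNormV Tri Tre (e (X (e.symm f))) ≤ a * ‖X (e.symm f)‖ := hup _
      _ ≤ a * (‖X‖ * traceNormV Tri Tre f) := by
          gcongr; exact X.le_opNorm_of_le (hlow f)
      _ = a * ‖X‖ * traceNormV Tri Tre f := by ring

lemma exists_tendsto_opNormV_sum_pow {V : Type*} [NormedAddCommGroup V] [NormedSpace ℝ V]
    [CompleteSpace V] (e : V ≃ₗ[ℝ] B) (ha : 0 ≤ a)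
    (hlow : ∀ f, ‖e.symm f‖ ≤ traceNormV Tri Tre f)
    (hup : ∀ u, traceNormV Tri Tre (e u) ≤ a * ‖u‖)
    {A : Module.End ℝ B} {c : ℝ} (hc0 : 0 ≤ c) (hc1 : c < 1)
    (hA : ∀ f, traceNormV Tri Tre (A f) ≤ c * traceNormV Tri Tre f) :
    ∃ T : Module.End ℝ B, Tendsto (fun N : ℕ => opNormV Tri Tre
      ((∑ ℓ ∈ Finset.range N, A ^ ℓ) - T)) atTop (𝓝 0) := by
  have hbound (n : ℕ) (u : V) : ‖e.conjRingEquiv.symm (A ^ n) u‖ ≤ a * c ^ n * ‖u‖ :=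
    calc ‖e.symm ((A ^ n) (e u))‖ ≤ c ^ n * traceNormV Tri Tre (e u) :=
          (hlow _).trans (traceNormV_pow_apply_le hc0 hA n _)
      _ ≤ c ^ n * (a * ‖u‖) := by gcongr; exact hup u
      _ = a * c ^ n * ‖u‖ := by ring
  set S : ℕ → V →L[ℝ] V := fun n => (e.conjRingEquiv.symm (A ^ n)).mkContinuous _ (hbound n)
  have hS : Summable S := .of_norm_bounded ((summable_geometric_of_lt_one hc0 hc1).mul_left a)
    fun n => LinearMap.mkContinuous_norm_le _ (by positivity) _
  refine ⟨e.conjRingEquiv ((∑' n, S n : V →L[ℝ] V) : Module.End ℝ V), ?_⟩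
  have hpartial : Tendsto (fun N => ‖∑ ℓ ∈ Finset.range N, S ℓ - ∑' n, S n‖) atTop (𝓝 0) :=
    tendsto_iff_norm_sub_tendsto_zero.mp hS.hasSum.tendsto_sum_nat
  refine squeeze_zero (fun _ => opNormV_nonneg _) (fun N => ?_)
    (by simpa using hpartial.const_mul a)
  convert opNormV_conj_le e ha hlow hup (∑ ℓ ∈ Finset.range N, S ℓ - ∑' n, S n)
  simp [S, map_sub, map_sum]

lemma traceNormV_trace_bounds_of_forall_inner_eq_zero {M : ℝ} (hM : 0 ≤ M)
    (heΩ : ∀ u, eΩ u ∈ (LinearMap.ker Tre)ᗮ ∧ Tre (eΩ u) = Tri u)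
    (heΩc : ∀ v, eΩc v ∈ (LinearMap.ker Tri)ᗮ ∧ Tri (eΩc v) = Tre v)
    (ha : ∀ u : Hi, √(‖u‖ ^ 2 + ‖eΩ u‖ ^ 2) ≤ a * ‖u‖)
    (hb : ∀ v : He, √(‖v‖ ^ 2 + ‖eΩc v‖ ^ 2) ≤ b * ‖v‖) (haM : a ^ 2 ≤ M) (hbM : b ^ 2 ≤ M)
    {u₁ : Hi} {u₂ : He} (hu₁ : u₁ ∈ (LinearMap.ker Tri)ᗮ) (hu₂ : u₂ ∈ (LinearMap.ker Tre)ᗮ)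
    (horth : ∀ vi ve, Tri vi = Tre ve → ⟪u₁, vi⟫ + ⟪u₂, ve⟫ = 0) :
    let f := Tre u₂ - Tri u₁
    ((1 - √(M / (M + 2))) * traceNormV Tri Tre f ≤ traceNormV Tri Tre (Tre u₂) ∧
      traceNormV Tri Tre (Tre u₂) ≤ √(M / (M + 2)) * traceNormV Tri Tre f) ∧
    ((1 - √(M / (M + 2))) * traceNormV Tri Tre f ≤ traceNormV Tri Tre (Tri u₁) ∧
      traceNormV Tri Tre (Tri u₁) ≤ √(M / (M + 2)) * traceNormV Tri Tre f) := by
  -- `p`, `q`: whole-space harmonic extensions of `Tre u₂`, `Tri u₁`; `P`: the double layer potential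
  set p := WithLp.toLp 2 (eΩc u₂, u₂)
  set q := WithLp.toLp 2 (u₁, eΩ u₁)
  set P := WithLp.toLp 2 (u₁, u₂)
  have hNp : traceNormV Tri Tre (Tre u₂) = ‖p‖ :=
    traceNormV_eq_norm (heΩc u₂).1 hu₂ (heΩc u₂).2 rfl
  have hNq : traceNormV Tri Tre (Tri u₁) = ‖q‖ :=
    traceNormV_eq_norm hu₁ (heΩ u₁).1 rfl (heΩ u₁).2
  have hNf : traceNormV Tri Tre (Tre u₂ - Tri u₁) = ‖p - q‖ :=
    traceNormV_eq_norm (u := eΩc u₂ - u₁) (v := u₂ - eΩ u₁)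
      (Submodule.sub_mem _ (heΩc u₂).1 hu₁) (Submodule.sub_mem _ hu₂ (heΩ u₁).1)
      (by rw [map_sub, (heΩc u₂).2]) (by rw [map_sub, (heΩ u₁).2])
  have hP : ‖P‖ ^ 2 = ‖u₁‖ ^ 2 + ‖u₂‖ ^ 2 := WithLp.prod_norm_sq_eq_of_L2 P
  have hpq : ⟪p, q⟫ = -‖P‖ ^ 2 := by
    have h₁ := horth u₁ (eΩ u₁) (heΩ u₁).2.symm
    have h₂ := horth (eΩc u₂) u₂ (heΩc u₂).2
    rw [real_inner_self_eq_norm_sq] at h₁ h₂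
    rw [WithLp.prod_inner_apply, hP]
    linarith [real_inner_comm u₁ (eΩc u₂)]
  have hp : ‖p‖ ^ 2 ≤ M * ‖P‖ ^ 2 := by
    have hb₂ := (Real.sqrt_le_iff.mp (hb u₂)).2
    rw [show ‖p‖ ^ 2 = ‖eΩc u₂‖ ^ 2 + ‖u₂‖ ^ 2 from WithLp.prod_norm_sq_eq_of_L2 p, hP]
    nlinarith [mul_le_mul_of_nonneg_right hbM (sq_nonneg ‖u₂‖), sq_nonneg ‖u₁‖]
  have hq : ‖q‖ ^ 2 ≤ M * ‖P‖ ^ 2 := by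
    have ha₁ := (Real.sqrt_le_iff.mp (ha u₁)).2
    rw [show ‖q‖ ^ 2 = ‖u₁‖ ^ 2 + ‖eΩ u₁‖ ^ 2 from WithLp.prod_norm_sq_eq_of_L2 q, hP]
    nlinarith [mul_le_mul_of_nonneg_right haM (sq_nonneg ‖u₁‖), sq_nonneg ‖u₂‖]
  have hqp := norm_sub_bounds_of_inner_eq_neg hM (real_inner_comm p q ▸ hpq) hq hp
  rw [norm_sub_rev] at hqp
  simp only [hNp, hNq, hNf]
  exact ⟨norm_sub_bounds_of_inner_eq_neg hM hpq hp hq, hqp⟩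

lemma traceNormV_half_smul_add_bounds {M : ℝ} (hM : 0 ≤ M)
    (heΩ : ∀ u, eΩ u ∈ (LinearMap.ker Tre)ᗮ ∧ Tre (eΩ u) = Tri u)
    (heΩc : ∀ v, eΩc v ∈ (LinearMap.ker Tri)ᗮ ∧ Tri (eΩc v) = Tre v)
    (ha : ∀ u : Hi, √(‖u‖ ^ 2 + ‖eΩ u‖ ^ 2) ≤ a * ‖u‖)
    (hb : ∀ v : He, √(‖v‖ ^ 2 + ‖eΩc v‖ ^ 2) ≤ b * ‖v‖) (haM : a ^ 2 ≤ M) (hbM : b ^ 2 ≤ M)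
    {K : B →ₗ[ℝ] B} {f : B}
    (hKf : ∃ u : Hi × He,
      u.1 ∈ (LinearMap.ker Tri)ᗮ ∧ u.2 ∈ (LinearMap.ker Tre)ᗮ ∧
      Tri u.1 - Tre u.2 = -f ∧
      (∀ (vi : Hi) (ve : He), Tri vi = Tre ve → ⟪u.1, vi⟫ + ⟪u.2, ve⟫ = 0) ∧
      K f = ((1 : ℝ) / 2) • (Tri u.1 + Tre u.2)) :
    ((1 - √(M / (M + 2))) * traceNormV Tri Tre f ≤
        traceNormV Tri Tre (((1 : ℝ) / 2) • f + K f) ∧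
      traceNormV Tri Tre (((1 : ℝ) / 2) • f + K f) ≤ √(M / (M + 2)) * traceNormV Tri Tre f) ∧
    ((1 - √(M / (M + 2))) * traceNormV Tri Tre f ≤
        traceNormV Tri Tre (-(((1 : ℝ) / 2) • f) + K f) ∧
      traceNormV Tri Tre (-(((1 : ℝ) / 2) • f) + K f) ≤
        √(M / (M + 2)) * traceNormV Tri Tre f) := by
  obtain ⟨⟨u₁, u₂⟩, hu₁, hu₂, hjump, horth, hK⟩ := hKf
  obtain rfl : f = Tre u₂ - Tri u₁ := by rw [← neg_sub, hjump, neg_neg]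
  have hplus : ((1 : ℝ) / 2) • (Tre u₂ - Tri u₁) + K (Tre u₂ - Tri u₁) = Tre u₂ := by
    rw [hK]; module
  have hminus : -(((1 : ℝ) / 2) • (Tre u₂ - Tri u₁)) + K (Tre u₂ - Tri u₁) = Tri u₁ := by
    rw [hK]; module
  rw [hplus, hminus]
  exact traceNormV_trace_bounds_of_forall_inner_eq_zero hM heΩ heΩc ha hb haM hbM hu₁ hu₂ horth

end TraceNorm

/-- `Hi = Ḣ¹(Ω)`, `He = Ḣ¹(Ω̄ᶜ)`, `B = 𝔅(∂Ω)`; `eΩ`, `eΩc` are the harmonic extensions across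
`∂Ω`, and `K f = ½(tr_i + tr_e)(D f)` where `D f = (u.1, u.2)` is the double layer potential:
harmonic, with trace jump `−f` and no jump of the weak normal derivative. -/
theorem stmt17 :
    ∃ c : ℝ → ℝ → ℝ,
      ∀ (Hi : Type u) (He : Type v) (B : Type w)
        [NormedAddCommGroup Hi] [InnerProductSpace ℝ Hi] [CompleteSpace Hi]
        [NormedAddCommGroup He] [InnerProductSpace ℝ He] [CompleteSpace He]
        [AddCommGroup B] [Module ℝ B]
        (Tri : Hi →ₗ[ℝ] B) (Tre : He →ₗ[ℝ] B),
        Function.Surjective Tri → Function.Surjective Tre →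
        IsClosed ((LinearMap.ker Tri : Submodule ℝ Hi) : Set Hi) →
        IsClosed ((LinearMap.ker Tre : Submodule ℝ He) : Set He) →
        ∀ eΩ : Hi →ₗ[ℝ] He,
          (∀ u : Hi, eΩ u ∈ (LinearMap.ker Tre)ᗮ ∧ Tre (eΩ u) = Tri u) →
          (∃ C : ℝ, 0 ≤ C ∧ ∀ u : Hi, Real.sqrt (‖u‖ ^ 2 + ‖eΩ u‖ ^ 2) ≤ C * ‖u‖) →
        ∀ eΩc : He →ₗ[ℝ] Hi,
          (∀ v : He, eΩc v ∈ (LinearMap.ker Tri)ᗮ ∧ Tri (eΩc v) = Tre v) →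
          (∃ C : ℝ, 0 ≤ C ∧ ∀ v : He, Real.sqrt (‖v‖ ^ 2 + ‖eΩc v‖ ^ 2) ≤ C * ‖v‖) →
        ∀ K : B →ₗ[ℝ] B,
          (∀ f : B, ∃ u : Hi × He,
            u.1 ∈ (LinearMap.ker Tri)ᗮ ∧ u.2 ∈ (LinearMap.ker Tre)ᗮ ∧
            Tri u.1 - Tre u.2 = -f ∧
            (∀ (vi : Hi) (ve : He), Tri vi = Tre ve → ⟪u.1, vi⟫ + ⟪u.2, ve⟫ = 0) ∧
            K f = ((1 : ℝ) / 2) • (Tri u.1 + Tre u.2)) →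
          (0 < c (extNorm eΩ) (extNorm eΩc) ∧ c (extNorm eΩ) (extNorm eΩc) < 1 ∧
          (∀ f : B,
            (1 - c (extNorm eΩ) (extNorm eΩc)) * traceNormV Tri Tre f ≤
              traceNormV Tri Tre (((1 : ℝ) / 2) • f + K f) ∧
            traceNormV Tri Tre (((1 : ℝ) / 2) • f + K f) ≤
              c (extNorm eΩ) (extNorm eΩc) * traceNormV Tri Tre f) ∧
          (∀ f : B,
            (1 - c (extNorm eΩ) (extNorm eΩc)) * traceNormV Tri Tre f ≤
              traceNormV Tri Tre (-(((1 : ℝ) / 2) • f) + K f) ∧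
            traceNormV Tri Tre (-(((1 : ℝ) / 2) • f) + K f) ≤
              c (extNorm eΩ) (extNorm eΩc) * traceNormV Tri Tre f) ∧
          (∃ T : B →ₗ[ℝ] B,
            Tendsto (fun N : ℕ => opNormV Tri Tre
              ((∑ ℓ ∈ Finset.range N,
                (((1 : ℝ) / 2) • (LinearMap.id : Module.End ℝ B) + K) ^ ℓ) - T))
              atTop (nhds 0)) ∧
          (∃ T : B →ₗ[ℝ] B,
            Tendsto (fun N : ℕ => opNormV Tri Tre
              ((∑ ℓ ∈ Finset.range N,
                ((-(1 : ℝ) / 2) • (LinearMap.id : Module.End ℝ B) + K) ^ ℓ) - T))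
              atTop (nhds 0))) := by
  refine ⟨fun a b => √((a ^ 2 + b ^ 2 + 1) / (a ^ 2 + b ^ 2 + 1 + 2)), ?_⟩
  intro Hi He B _ _ _ _ _ _ _ _ Tri Tre hTri hTre hKi _ eΩ heΩ haΩ eΩc heΩc hbΩ K hK
  beta_reduce
  set M := extNorm eΩ ^ 2 + extNorm eΩc ^ 2 + 1
  have hc0 : 0 < √(M / (M + 2)) := Real.sqrt_pos.mpr (by positivity)
  have hc1 : √(M / (M + 2)) < 1 :=
    (Real.sqrt_lt' one_pos).mpr (by rw [one_pow, div_lt_one (by positivity)]; linarith)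
  have hbounds (f : B) := traceNormV_half_smul_add_bounds (M := M) (by positivity) heΩ heΩc
    (sqrt_le_extNorm_mul haΩ) (sqrt_le_extNorm_mul hbΩ) (by linarith [sq_nonneg (extNorm eΩc)])
    (by linarith [sq_nonneg (extNorm eΩ)]) (hK f)
  have : CompleteSpace (LinearMap.ker Tri) := hKi.completeSpace_coe
  have hneumann {A : Module.End ℝ B}
      (hA : ∀ f, traceNormV Tri Tre (A f) ≤ √(M / (M + 2)) * traceNormV Tri Tre f) :=
    exists_tendsto_opNormV_sum_pow (orthogonalKerEquiv hTri) extNorm_nonneg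
      (fun f => by simpa using norm_le_traceNormV hTre ((orthogonalKerEquiv hTri).symm f).2)
      (traceNormV_le_mul_norm (fun u => (heΩ u).2) (sqrt_le_extNorm_mul haΩ) ·) hc0.le hc1 hA
  refine ⟨hc0, hc1, fun f => (hbounds f).1, fun f => (hbounds f).2,
    hneumann fun f => ?_, hneumann fun f => ?_⟩
  · simpa using (hbounds f).1.2
  · simpa [neg_div] using (hbounds f).2.2

end
end
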